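/- arXiv:0911.1810 — 4 statements merged into one kernel-verified Lean document; each statement's English description precedes it below -/
import Mathlib

section
/- Let A be an n×n complex matrix with rank(A) ≥ n-1 (n ≥ 2) such that det(A) is not equal to i·r for any real r < 0 (i.e., det A is not a negative imaginary number). Then the matrix ψ(A) = A + i·conj(adj(A))^T is invertible, where conj denotes entrywise complex conjugation. -/
/-!
Suppose `ψ(A) z = 0`. Since `Aᴴ ψ(A) = Aᴴ A + i · conj(det A) · 1`, pairing with `z` gives
`i · conj(det A) · ‖z‖² = -‖A z‖²`; so unless `A z = 0`, `i · conj(det A)` is a negative real,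
i.e. `det A = i r` with `r < 0`. Hence `A z = 0` and `adj(A)ᴴ z = 0`. When `rank A ≥ n - 1`, the
kernel of `A` is contained in the range of `adj A` (for singular `A`, Cramer's rule shows
`adj A ≠ 0`, and its nonzero columns span the at most one-dimensional kernel). So `z` lies in the
range of `adj A` and is orthogonal to it, hence `z = 0`.
-/

open Matrix Module

namespace Matrix

variable {ι K : Type*} [Fintype ι] [DecidableEq ι] [Field K]

lemma updateCol_mulVec (A : Matrix ι ι K) (j : ι) (b x : ι → K) :
    A.updateCol j b *ᵥ x = A *ᵥ Function.update x j 0 + x j • b := by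
  ext i
  simp only [mulVec, dotProduct, updateCol_apply, Pi.add_apply, Pi.smul_apply, smul_eq_mul,
    Function.update_apply]
  rw [Fintype.sum_eq_add_sum_compl j, Fintype.sum_eq_add_sum_compl j, add_comm]
  simp only [if_pos, mul_zero, zero_add, mul_comm]
  congr 1
  refine Finset.sum_congr rfl fun k hk => ?_
  have hkj : k ≠ j := by simpa using hk
  simp only [hkj, if_false, mul_comm]

omit [DecidableEq ι] in
lemma finrank_ker_mulVecLin_le_one {A : Matrix ι ι K} (hA : Fintype.card ι ≤ A.rank + 1) :
    finrank K (LinearMap.ker A.mulVecLin) ≤ 1 := by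
  have := LinearMap.finrank_range_add_finrank_ker A.mulVecLin
  rw [finrank_fintype_fun_eq_card] at this
  unfold rank at hA
  omega

omit [DecidableEq ι] in
lemma ker_mulVecLin_eq_span_singleton {A : Matrix ι ι K} (hA : Fintype.card ι ≤ A.rank + 1)
    {z : ι → K} (hz : A *ᵥ z = 0) (hz0 : z ≠ 0) :
    LinearMap.ker A.mulVecLin = K ∙ z :=
  (Submodule.eq_of_le_of_finrank_le (by simpa using hz)
    (by rw [finrank_span_singleton hz0]; exact finrank_ker_mulVecLin_le_one hA)).symm

lemma adjugate_ne_zero_of_det_eq_zero {A : Matrix ι ι K} (hA : Fintype.card ι ≤ A.rank + 1)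
    (hdet : A.det = 0) : A.adjugate ≠ 0 := by
  obtain ⟨z, hz0, hAz⟩ := exists_mulVec_eq_zero_iff.mpr hdet
  obtain ⟨j, hj⟩ : ∃ j, z j ≠ 0 := Function.ne_iff.mp hz0
  obtain ⟨b, hb⟩ : ∃ b, b ∉ Set.range A.mulVec := by
    by_contra! h
    have := (isUnit_iff_isUnit_det A).mp (mulVec_surjective_iff_isUnit.mp h)
    simp [hdet] at this
  -- Replacing the `j`-th column, which depends on the others, by `b ∉ range A` gives a
  -- nonsingular matrix, whose determinant is `(adj A *ᵥ b) j` by Cramer's rule.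
  have hB : (A.updateCol j b).det ≠ 0 := by
    intro h
    obtain ⟨x, hx0, hBx⟩ := exists_mulVec_eq_zero_iff.mpr h
    rw [updateCol_mulVec] at hBx
    have hxj : x j = 0 := by
      by_contra hxj
      refine hb ⟨-(x j)⁻¹ • Function.update x j 0, ?_⟩
      rw [mulVec_smul, eq_neg_of_add_eq_zero_left hBx, neg_smul, smul_neg, neg_neg,
        inv_smul_smul₀ hxj]
    rw [hxj, zero_smul, add_zero, Function.update_eq_self_iff.mpr hxj.symm] at hBx
    have hx : x ∈ K ∙ z := by simpa [← ker_mulVecLin_eq_span_singleton hA hAz hz0] using hBx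
    obtain ⟨c, rfl⟩ := Submodule.mem_span_singleton.mp hx
    have hc : c = 0 := by simpa [hj] using hxj
    simp [hc] at hx0
  intro hadj
  rw [← cramer_apply, cramer_eq_adjugate_mulVec, hadj, zero_mulVec] at hB
  exact hB rfl

lemma ker_mulVecLin_le_range_adjugate {A : Matrix ι ι K} (hA : Fintype.card ι ≤ A.rank + 1) :
    LinearMap.ker A.mulVecLin ≤ LinearMap.range A.adjugate.mulVecLin := by
  by_cases hdet : A.det = 0
  · obtain ⟨w, hw⟩ : ∃ w, A.adjugate *ᵥ w ≠ 0 := by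
      by_contra! h
      exact adjugate_ne_zero_of_det_eq_zero hA hdet
        (ext_of_mulVec_single fun i => by rw [h, zero_mulVec])
    have hAw : A *ᵥ (A.adjugate *ᵥ w) = 0 := by
      rw [mulVec_mulVec, mul_adjugate, hdet, zero_smul, zero_mulVec]
    rw [ker_mulVecLin_eq_span_singleton hA hAw hw, Submodule.span_singleton_le_iff_mem]
    exact ⟨w, rfl⟩
  · rw [ker_mulVecLin_eq_bot_iff.mpr fun v hv => ?_]
    · exact bot_le
    · by_contra hv0
      exact hdet (exists_mulVec_eq_zero_iff.mp ⟨v, hv0, hv⟩)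

end Matrix

section Psi

open Complex ComplexOrder

variable {ι : Type*} [Fintype ι] [DecidableEq ι]

def psi (A : Matrix ι ι ℂ) : Matrix ι ι ℂ := A + I • A.adjugateᴴ

lemma conjTranspose_mul_psi (A : Matrix ι ι ℂ) :
    Aᴴ * psi A = Aᴴ * A + (I * star A.det) • 1 := by
  rw [psi, Matrix.mul_add, mul_smul_comm, ← conjTranspose_mul, adjugate_mul,
    conjTranspose_smul, conjTranspose_one, smul_smul]

lemma mulVec_eq_zero_of_psi_mulVec_eq_zero {A : Matrix ι ι ℂ}
    (hdet : ¬ ∃ r : ℝ, r < 0 ∧ A.det = I * r) {z : ι → ℂ} (hz : psi A *ᵥ z = 0) :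
    A *ᵥ z = 0 := by
  have hpairing : (I * star A.det) * (star z ⬝ᵥ z) = -(star (A *ᵥ z) ⬝ᵥ (A *ᵥ z)) := by
    have := congrArg (star z ⬝ᵥ Aᴴ *ᵥ ·) hz
    simp only [mulVec_mulVec, conjTranspose_mul_psi, add_mulVec, smul_mulVec, one_mulVec,
      dotProduct_add, dotProduct_smul, smul_eq_mul, mulVec_zero, dotProduct_zero] at this
    rw [← mulVec_mulVec, dotProduct_mulVec, ← star_mulVec] at this
    exact eq_neg_of_add_eq_zero_right this
  by_contra hAz
  have hz0 : z ≠ 0 := by rintro rfl; simp at hAz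
  have hneg : I * star A.det < 0 := by
    rw [eq_div_of_mul_eq (dotProduct_star_self_pos_iff.mpr hz0).ne' hpairing]
    exact div_neg_of_neg_of_pos (neg_lt_zero.mpr (dotProduct_star_self_pos_iff.mpr hAz))
      (dotProduct_star_self_pos_iff.mpr hz0)
  obtain ⟨hre, him⟩ := Complex.neg_iff.mp hneg
  refine hdet ⟨_, hre, ?_⟩
  apply Complex.ext <;> simp_all

theorem isUnit_psi {A : Matrix ι ι ℂ} (hrank : Fintype.card ι ≤ A.rank + 1)
    (hdet : ¬ ∃ r : ℝ, r < 0 ∧ A.det = I * r) : IsUnit (psi A) := by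
  rw [isUnit_iff_isUnit_det, isUnit_iff_ne_zero, Ne, ← exists_mulVec_eq_zero_iff]
  rintro ⟨z, hz0, hz⟩
  have hAz := mulVec_eq_zero_of_psi_mulVec_eq_zero hdet hz
  have hadj : A.adjugateᴴ *ᵥ z = 0 := by
    rw [psi, add_mulVec, hAz, zero_add, smul_mulVec, smul_eq_zero] at hz
    exact hz.resolve_left I_ne_zero
  obtain ⟨w, hw⟩ := ker_mulVecLin_le_range_adjugate hrank (by simpa using hAz)
  rw [mulVecLin_apply] at hw
  subst hw
  apply hz0
  rw [← dotProduct_star_self_eq_zero, star_mulVec, ← dotProduct_mulVec, hadj, dotProduct_zero]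

end Psi

theorem psi_isUnit_general {n : ℕ} (A : Matrix (Fin n) (Fin n) ℂ)
    (hrank : n - 1 ≤ A.rank)
    (hdet : ¬ ∃ r : ℝ, r < 0 ∧ A.det = Complex.I * r) :
    IsUnit (A + Complex.I • (A.adjugate)ᴴ) :=
  isUnit_psi (by rw [Fintype.card_fin]; omega) hdet

theorem psi_isUnit {n : ℕ} (hn : 2 ≤ n) (A : Matrix (Fin n) (Fin n) ℂ)
    (hrank : n - 1 ≤ A.rank)
    (hdet : ¬ ∃ r : ℝ, r < 0 ∧ A.det = Complex.I * r) :
    IsUnit (A + Complex.I • (A.adjugate)ᴴ) :=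
  psi_isUnit_general A hrank hdet
end

section
/- Let A be an n×n Hermitian complex matrix with rank(A) ≥ n-1 (n ≥ 2). Then A + i·conj(adj(A))^T is invertible. -/
open Matrix

/-!
Diagonalise `A = U D U*` with `U` unitary and `D` real diagonal. Since `A` is Hermitian so is
`adj A`, and conjugation by `U` commutes with the adjugate, so
`A + i (adj A)ᴴ = U (D + i adj D) U*`. The `k`-th diagonal entry of the middle factor is
`λₖ + i ∏_{j ≠ k} λⱼ`; its real and imaginary parts vanish together only if two eigenvalues
vanish, i.e. only if `rank A ≤ n - 2`.
-/

theorem Fintype.subsingleton_setOf_eq_zero_of_card_sub_one_le {ι M : Type*} [Fintype ι] [Zero M]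
    [DecidableEq M] {f : ι → M} (h : Fintype.card ι - 1 ≤ Fintype.card {i // f i ≠ 0}) :
    {i | f i = 0}.Subsingleton := by
  intro i hi j hj
  have hcompl : Fintype.card {i // f i ≠ 0} = Fintype.card ι - Fintype.card {i // f i = 0} :=
    Fintype.card_subtype_compl _
  have hle := Fintype.card_subtype_le (fun i => f i = 0)
  have hzeros : Fintype.card {i // f i = 0} ≤ 1 := by omega
  exact congrArg Subtype.val (Fintype.card_le_one_iff.mp hzeros ⟨i, hi⟩ ⟨j, hj⟩)

theorem Complex.ofReal_add_I_mul_ofReal_eq_zero {a b : ℝ} :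
    (a : ℂ) + Complex.I * b = 0 ↔ a = 0 ∧ b = 0 := by
  simp [Complex.ext_iff]

namespace Matrix

variable {n α : Type*} [Fintype n] [DecidableEq n]

section CommRing

variable [CommRing α]

theorem adjugate_eq_det_smul_of_mul_eq_one {P Q : Matrix n n α} (h : P * Q = 1) :
    adjugate P = P.det • Q := by
  calc adjugate P = adjugate P * P * Q := by rw [Matrix.mul_assoc, h, Matrix.mul_one]
    _ = P.det • Q := by rw [adjugate_mul, Matrix.smul_mul, Matrix.one_mul]

theorem adjugate_mul_mul_of_mul_eq_one {P Q : Matrix n n α} (h : P * Q = 1) (M : Matrix n n α) :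
    adjugate (P * M * Q) = P * adjugate M * Q := by
  rw [adjugate_mul_distrib, adjugate_mul_distrib, adjugate_eq_det_smul_of_mul_eq_one h,
    adjugate_eq_det_smul_of_mul_eq_one (mul_eq_one_comm.mp h)]
  simp only [Matrix.smul_mul, Matrix.mul_smul, smul_smul, Matrix.mul_assoc]
  rw [← det_mul, h, det_one, one_smul]

theorem adjugate_conjStarAlgAut [StarRing α] {S : Type*} [Monoid S] [DistribMulAction S α]
    [IsScalarTower S α α] [SMulCommClass S α α] (u : unitary (Matrix n n α))
    (M : Matrix n n α) :
    adjugate (Unitary.conjStarAlgAut S _ u M) = Unitary.conjStarAlgAut S _ u (adjugate M) :=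
  adjugate_mul_mul_of_mul_eq_one (Unitary.mul_star_self_of_mem u.2) M

end CommRing

theorem isUnit_diagonal_add_I_smul_adjugate {d : n → ℝ} (hd : {i | d i = 0}.Subsingleton) :
    IsUnit (diagonal (fun i => (d i : ℂ)) +
      Complex.I • adjugate (diagonal fun i => (d i : ℂ))) := by
  rw [adjugate_diagonal, ← diagonal_smul, diagonal_add, isUnit_diagonal, Pi.isUnit_iff]
  intro i
  simp only [Pi.smul_apply, smul_eq_mul, ← Complex.ofReal_prod, isUnit_iff_ne_zero]
  rw [Ne, Complex.ofReal_add_I_mul_ofReal_eq_zero, Finset.prod_eq_zero_iff]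
  rintro ⟨hi, j, hj, hdj⟩
  exact Finset.ne_of_mem_erase hj (hd hdj hi)

end Matrix

theorem psi_isUnit_of_hermitian_general {n : ℕ} (A : Matrix (Fin n) (Fin n) ℂ)
    (hA : A.IsHermitian) (hrank : n - 1 ≤ A.rank) :
    IsUnit (A + Complex.I • (A.adjugate)ᴴ) := by
  have hzeros : {i | hA.eigenvalues i = 0}.Subsingleton := by
    apply Fintype.subsingleton_setOf_eq_zero_of_card_sub_one_le
    rwa [Fintype.card_fin, ← hA.rank_eq_card_non_zero_eigs]
  rw [hA.adjugate.eq, hA.spectral_theorem, adjugate_conjStarAlgAut, ← map_smul, ← map_add,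
    isUnit_map_iff]
  exact isUnit_diagonal_add_I_smul_adjugate hzeros

theorem psi_isUnit_of_hermitian {n : ℕ} (hn : 2 ≤ n) (A : Matrix (Fin n) (Fin n) ℂ)
    (hA : A.IsHermitian) (hrank : n - 1 ≤ A.rank) :
    IsUnit (A + Complex.I • (A.adjugate)ᴴ) :=
  psi_isUnit_of_hermitian_general A hA hrank
end

section
/- Let A be an n×n real matrix with rank(A) ≥ n-1 (n ≥ 2), viewed as a complex matrix. Then A + i·adj(A)^T is invertible (over ℂ). -/
/-!
Write `A` also for its complexification and suppose `(A + i adj(A)ᵀ) v = 0`. With `u = A v` and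
`w = adj(A)ᵀ v` we get `w* u = v* adj(A) A v = det A ‖v‖²`, a real number, while
`w* (u + i w) = 0`; so `‖w‖² = 0`, and then `u = 0` as well. The real and imaginary parts `x` of
`v` thus satisfy `A x = 0` and `xᵀ adj(A) = 0`. If `rank A ≥ n - 1` and `A x = 0` with `x ≠ 0`, the
kernel of `A` is the line through `x`, so every column of `adj A` (which `A` kills) is a multiple of
`x`; pairing with `xᵀ` forces `adj A = 0`. But in rank `≥ n - 1` replacing a suitable column of `A`
by a vector `b` outside its range gives an invertible matrix, whose determinant is by Cramer's rule an
entry of `adj A *ᵥ b`.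
-/

open Matrix

namespace Matrix

theorem updateCol_mulVec_s9 {m n α : Type*} [Fintype n] [DecidableEq n] [NonUnitalCommSemiring α]
    (A : Matrix m n α) (j : n) (b : m → α) (y : n → α) :
    A.updateCol j b *ᵥ y = A *ᵥ Function.update y j 0 + y j • b := by
  ext i
  simp [mulVec, dotProduct, updateCol_apply, Function.update_apply, mul_ite, Finset.sum_ite,
    Finset.filter_eq', Finset.filter_ne', add_comm, mul_comm]

section

variable {ι K : Type*} [Fintype ι] [Field K] {A : Matrix ι ι K}

theorem exists_smul_eq_of_mulVec_eq_zero (hrank : Fintype.card ι - 1 ≤ A.rank) {x z : ι → K}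
    (hx : x ≠ 0) (hAx : A *ᵥ x = 0) (hAz : A *ᵥ z = 0) : ∃ c : K, c • x = z := by
  have hxN : x ∈ LinearMap.ker A.mulVecLin := hAx
  have hN : Module.finrank K (LinearMap.ker A.mulVecLin) = 1 := by
    have := LinearMap.finrank_range_add_finrank_ker A.mulVecLin
    rw [Module.finrank_fintype_fun_eq_card] at this
    have hpos : Module.finrank K (LinearMap.ker A.mulVecLin) ≠ 0 := by
      rw [Ne, Submodule.finrank_eq_zero]
      exact fun h ↦ hx (by rwa [h, Submodule.mem_bot] at hxN)
    change A.rank + _ = _ at this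
    omega
  obtain ⟨c, hc⟩ := exists_smul_eq_of_finrank_eq_one hN (x := ⟨x, hxN⟩)
    (by simpa [Subtype.ext_iff] using hx) ⟨z, hAz⟩
  exact ⟨c, congrArg Subtype.val hc⟩

theorem det_updateCol_ne_zero [DecidableEq ι] (hrank : Fintype.card ι - 1 ≤ A.rank) {x : ι → K}
    (hAx : A *ᵥ x = 0) {j : ι} (hxj : x j ≠ 0) {b : ι → K}
    (hb : b ∉ LinearMap.range A.mulVecLin) : (A.updateCol j b).det ≠ 0 := by
  intro hdet
  obtain ⟨y, hy, hMy⟩ := exists_mulVec_eq_zero_iff.mpr hdet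
  rw [updateCol_mulVec_s9] at hMy
  have hyj : y j = 0 := by
    by_contra hyj
    refine hb ⟨-(y j)⁻¹ • Function.update y j 0, ?_⟩
    rw [map_smul, mulVecLin_apply, eq_neg_of_add_eq_zero_left hMy, smul_neg, smul_smul,
      neg_mul, inv_mul_cancel₀ hyj, neg_smul, one_smul, neg_neg]
  rw [hyj, zero_smul, add_zero] at hMy
  obtain ⟨c, hc⟩ := exists_smul_eq_of_mulVec_eq_zero hrank (fun h ↦ hxj (by simp [h])) hAx hMy
  have hc0 : c = 0 := by simpa [hxj] using congrFun hc j
  apply hy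
  rw [← Function.update_eq_self j y, hyj, ← hc, hc0, zero_smul]

theorem adjugate_ne_zero_of_card_sub_one_le_rank [DecidableEq ι] [Nonempty ι]
    (hrank : Fintype.card ι - 1 ≤ A.rank) : adjugate A ≠ 0 := by
  intro hadj
  by_cases hdet : A.det = 0
  · obtain ⟨x, hx, hAx⟩ := exists_mulVec_eq_zero_iff.mpr hdet
    obtain ⟨j, hxj⟩ := Function.ne_iff.mp hx
    obtain ⟨b, hb⟩ : ∃ b, b ∉ LinearMap.range A.mulVecLin := by
      have hns : ¬ Function.Surjective A.mulVecLin := fun hs ↦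
        hx (LinearMap.injective_iff_surjective.mpr hs (by simpa using hAx))
      simpa [Function.Surjective] using hns
    apply det_updateCol_ne_zero hrank hAx hxj hb
    rw [← cramer_apply, cramer_eq_adjugate_mulVec, hadj, zero_mulVec, Pi.zero_apply]
  · have h := adjugate_mul A
    rw [hadj, zero_mul, eq_comm, smul_eq_zero] at h
    exact h.elim hdet one_ne_zero

theorem dotProduct_eq_zero_of_mulVec_eq_zero_of_vecMul_adjugate_eq_zero [DecidableEq ι]
    (hrank : Fintype.card ι - 1 ≤ A.rank) {x y : ι → K} (hAx : A *ᵥ x = 0)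
    (hy : y ᵥ* adjugate A = 0) : y ⬝ᵥ x = 0 := by
  by_contra hxy
  have hx : x ≠ 0 := by rintro rfl; simp at hxy
  obtain ⟨i, -⟩ := Function.ne_iff.mp hx
  have : Nonempty ι := ⟨i⟩
  apply adjugate_ne_zero_of_card_sub_one_le_rank hrank
  have hdet : A.det = 0 := exists_mulVec_eq_zero_iff.mp ⟨x, hx, hAx⟩
  have hcol : ∀ k, adjugate A *ᵥ Pi.single k 1 = 0 := by
    intro k
    have hAcol : A *ᵥ (adjugate A *ᵥ Pi.single k 1) = 0 := by
      rw [mulVec_mulVec, mul_adjugate, hdet, zero_smul, zero_mulVec]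
    obtain ⟨t, ht⟩ := exists_smul_eq_of_mulVec_eq_zero hrank hx hAx hAcol
    have ht0 : t * (y ⬝ᵥ x) = 0 := by
      rw [← smul_eq_mul, ← dotProduct_smul, ht, dotProduct_mulVec, hy, zero_dotProduct]
    rw [← ht, (mul_eq_zero.mp ht0).resolve_right hxy, zero_smul]
  ext i k
  simpa using congrFun (hcol k) i

theorem eq_zero_of_mulVec_eq_zero_of_vecMul_adjugate_eq_zero [DecidableEq ι] [LinearOrder K]
    [IsStrictOrderedRing K] (hrank : Fintype.card ι - 1 ≤ A.rank) {x : ι → K}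
    (hAx : A *ᵥ x = 0) (hx : x ᵥ* adjugate A = 0) : x = 0 :=
  dotProduct_self_eq_zero.mp
    (dotProduct_eq_zero_of_mulVec_eq_zero_of_vecMul_adjugate_eq_zero hrank hAx hx)

end

theorem map_ofReal_mulVec_eq_zero {m n : Type*} [Fintype n] {M : Matrix m n ℝ}
    {v : n → ℂ} (h : M.map Complex.ofReal *ᵥ v = 0) :
    M *ᵥ (fun j ↦ (v j).re) = 0 ∧ M *ᵥ (fun j ↦ (v j).im) = 0 := by
  constructor <;> ext i
  · simpa [mulVec, dotProduct, Complex.re_sum] using congrArg Complex.re (congrFun h i)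
  · simpa [mulVec, dotProduct, Complex.im_sum] using congrArg Complex.im (congrFun h i)

open scoped ComplexOrder in
theorem mulVec_eq_zero_of_add_I_smul_mulVec_eq_zero {n : Type*} [Fintype n] [DecidableEq n]
    {P Q : Matrix n n ℂ} {r : ℝ} (hQP : Qᴴ * P = (r : ℂ) • 1) {v : n → ℂ}
    (h : (P + Complex.I • Q) *ᵥ v = 0) : Q *ᵥ v = 0 := by
  set w := Q *ᵥ v
  have hdot : star w ⬝ᵥ (P *ᵥ v) = r * (star v ⬝ᵥ v) := by
    rw [star_mulVec, ← dotProduct_mulVec, mulVec_mulVec, hQP, smul_mulVec, one_mulVec,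
      dotProduct_smul]
    rfl
  have key : r * (star v ⬝ᵥ v) + Complex.I * (star w ⬝ᵥ w) = 0 := by
    rw [← hdot, ← smul_eq_mul, ← dotProduct_smul, ← dotProduct_add, ← smul_mulVec, ← add_mulVec, h,
      dotProduct_zero]
  have hv := Complex.nonneg_iff.mp (dotProduct_star_self_nonneg v)
  have hw := Complex.nonneg_iff.mp (dotProduct_star_self_nonneg w)
  have hw_re : (star w ⬝ᵥ w).re = 0 := by simpa [← hv.2] using congrArg Complex.im key
  exact dotProduct_star_self_eq_zero.mp (Complex.ext hw_re hw.2.symm)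

end Matrix

theorem psi_isUnit_of_real_general {n : ℕ} (A : Matrix (Fin n) (Fin n) ℝ)
    (hrank : n - 1 ≤ A.rank) :
    IsUnit ((A.map (Complex.ofReal)) + Complex.I • ((A.map (Complex.ofReal)).adjugate)ᵀ) := by
  have hadj : (A.map Complex.ofReal).adjugate = A.adjugate.map Complex.ofReal :=
    (RingHom.map_adjugate Complex.ofRealHom A).symm
  have hdet : (A.map Complex.ofReal).det = A.det := (RingHom.map_det Complex.ofRealHom A).symm
  rw [isUnit_iff_isUnit_det, isUnit_iff_ne_zero]
  intro hB
  obtain ⟨v, hv, hBv⟩ := exists_mulVec_eq_zero_iff.mpr hB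
  have hreal : (A.map Complex.ofReal).adjugateᵀᴴ = (A.map Complex.ofReal).adjugate := by
    ext i j
    simp [hadj]
  have hQv := mulVec_eq_zero_of_add_I_smul_mulVec_eq_zero (r := A.det)
    (by rw [hreal, adjugate_mul, hdet]) hBv
  have hPv : A.map Complex.ofReal *ᵥ v = 0 := by
    rwa [add_mulVec, smul_mulVec, hQv, smul_zero, add_zero] at hBv
  rw [hadj, ← transpose_map] at hQv
  obtain ⟨hAre, hAim⟩ := map_ofReal_mulVec_eq_zero hPv
  obtain ⟨hadjre, hadjim⟩ := map_ofReal_mulVec_eq_zero hQv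
  rw [mulVec_transpose] at hadjre hadjim
  have hrank' : Fintype.card (Fin n) - 1 ≤ A.rank := by simpa using hrank
  have hre := eq_zero_of_mulVec_eq_zero_of_vecMul_adjugate_eq_zero hrank' hAre hadjre
  have him := eq_zero_of_mulVec_eq_zero_of_vecMul_adjugate_eq_zero hrank' hAim hadjim
  exact hv (funext fun i ↦ Complex.ext (congrFun hre i) (congrFun him i))

theorem psi_isUnit_of_real {n : ℕ} (hn : 2 ≤ n) (A : Matrix (Fin n) (Fin n) ℝ)
    (hrank : n - 1 ≤ A.rank) :
    IsUnit ((A.map (Complex.ofReal)) + Complex.I • ((A.map (Complex.ofReal)).adjugate)ᵀ) :=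
  psi_isUnit_of_real_general A hrank
end

section
/- Let V be a finite-dimensional real vector subspace of M_n(ℂ) (n even, n ≥ 2) such that every nonzero element of V is a real matrix of rank at least n-1. Then for every nonzero A ∈ V, the matrix A + i·adj(A)^T is invertible, and the map A ↦ A + i·adj(A)^T restricted to V \ {0} is odd (sends -A to the negative of the image of A). -/
/-!
Write `N = adj(A)ᵀ`. For real `A` both `AᴴN = Aᵀ adj(A)ᵀ` and `NᴴA = adj(A) A` equal `det A • 1`,
so the cross terms cancel in `(A + iN)ᴴ(A + iN) = AᴴA + NᴴN`; hence `(A + iN)v = 0` forces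
`Av = 0` and `Nv = 0`. If such a `v ≠ 0` existed, the rank bound would make `ker A = span {v}`,
so the columns of `adj A` (which `A` kills, as `det A = 0`) lie in `span {v} ⊆ ker (adj A)ᵀ`.
Then `(adj A)ᴴ adj A = (adj A)ᵀ adj A = 0`, i.e. `adj A = 0`, which is impossible for a matrix of
corank one. Oddness is `adj(-A) = (-1)ⁿ⁻¹ adj A` with `n` even.
-/

open Matrix

namespace Matrix

section Kernel

variable {m n R : Type*} [Fintype n]

theorem rank_add_finrank_ker_mulVecLin [Field R] (A : Matrix m n R) :
    A.rank + Module.finrank R (LinearMap.ker A.mulVecLin) = Fintype.card n := by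
  rw [rank, LinearMap.finrank_range_add_finrank_ker, Module.finrank_fintype_fun_eq_card]

theorem ker_mulVecLin_eq_span_singleton_s17 [Field R] {A : Matrix m n R}
    (hrank : Fintype.card n ≤ A.rank + 1) {v : n → R} (hv : v ≠ 0) (hAv : A *ᵥ v = 0) :
    LinearMap.ker A.mulVecLin = R ∙ v := by
  have hle : R ∙ v ≤ LinearMap.ker A.mulVecLin := by
    rwa [Submodule.span_singleton_le_iff_mem, LinearMap.mem_ker, mulVecLin_apply]
  refine (Submodule.eq_of_le_of_finrank_le hle ?_).symm
  have := A.rank_add_finrank_ker_mulVecLin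
  rw [finrank_span_singleton hv]
  omega

theorem mul_eq_zero_of_ker_le_ker {l o : Type*} [Fintype m] [CommRing R]
    {A : Matrix l m R} {M : Matrix m n R} {N : Matrix o m R}
    (hAM : A * M = 0) (hker : LinearMap.ker A.mulVecLin ≤ LinearMap.ker N.mulVecLin) :
    N * M = 0 := by
  refine ext_iff_mulVec.mpr fun x => ?_
  rw [← mulVec_mulVec, zero_mulVec]
  exact hker (by simp [mulVec_mulVec, hAM])

end Kernel

section Adjugate

variable {m R : Type*} [Fintype m] [DecidableEq m]

theorem adjugate_neg_of_even_card [CommRing R] (A : Matrix m m R)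
    (h : Even (Fintype.card m)) : (-A).adjugate = -A.adjugate := by
  cases isEmpty_or_nonempty m
  · exact Subsingleton.elim _ _
  · have hodd : Odd (Fintype.card m - 1) := Nat.Even.sub_odd Fintype.card_pos h odd_one
    rw [← neg_one_smul R A, adjugate_smul, hodd.neg_one_pow, neg_one_smul]

/-- Reduced to the normal form `fromBlocks 1 0 0 0`, whose adjugate has a `1` in the corner. -/
theorem adjugate_ne_zero_of_rank_add_one_eq [Field R] {A : Matrix m m R}
    (h : A.rank + 1 = Fintype.card m) : A.adjugate ≠ 0 := by
  obtain ⟨V, U, e, -, -, hVAU⟩ := exists_rank_normal_form A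
  intro hadj
  have hnormal : (fromBlocks 1 0 0 0 :
      Matrix (Fin A.rank ⊕ Fin (Fintype.card m - A.rank)) _ R).adjugate = 0 := by
    have := congrArg adjugate hVAU
    rw [adjugate_mul_distrib, adjugate_mul_distrib, hadj, zero_mul, mul_zero,
      adjugate_submatrix_equiv_self] at this
    ext i j
    simpa using (congrFun₂ this (e.symm i) (e.symm j)).symm
  have : Subsingleton (Fin (Fintype.card m - A.rank)) := by
    rw [← h, Nat.add_sub_cancel_left]
    infer_instance
  let i₀ : Fin (Fintype.card m - A.rank) := ⟨0, by omega⟩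
  rw [← diagonal_one, ← diagonal_zero, fromBlocks_diagonal, adjugate_diagonal] at hnormal
  have hcorner := congrFun₂ hnormal (Sum.inr i₀) (Sum.inr i₀)
  simp [Finset.prod_eq_zero_iff, Subsingleton.elim _ i₀] at hcorner

theorem conjTranspose_adjugate_of_conjTranspose_eq_transpose [CommRing R] [StarRing R]
    {A : Matrix m m R} (hA : Aᴴ = Aᵀ) : A.adjugateᴴ = A.adjugateᵀ := by
  rw [adjugate_conjTranspose, adjugate_transpose, hA]

theorem conjTranspose_mul_adjugate_transpose_comm [CommRing R] [StarRing R]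
    {A : Matrix m m R} (hA : Aᴴ = Aᵀ) : Aᴴ * A.adjugateᵀ = A.adjugateᵀᴴ * A := by
  rw [conjTranspose_transpose_eq_transpose_conjTranspose, adjugate_conjTranspose, hA,
    ← adjugate_transpose, transpose_transpose, ← transpose_mul, adjugate_mul, transpose_smul,
    transpose_one]

theorem adjugate_transpose_mulVec_ne_zero [Field R] [StarRing R] [PartialOrder R]
    [StarOrderedRing R] {A : Matrix m m R} (hA : Aᴴ = Aᵀ) (hrank : Fintype.card m ≤ A.rank + 1)
    {v : m → R} (hv : v ≠ 0) (hAv : A *ᵥ v = 0) : A.adjugateᵀ *ᵥ v ≠ 0 := by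
  intro hNv
  have hker := ker_mulVecLin_eq_span_singleton_s17 hrank hv hAv
  have hcorank : A.rank + 1 = Fintype.card m := by
    have := A.rank_add_finrank_ker_mulVecLin
    rwa [hker, finrank_span_singleton hv] at this
  have hAM : A * A.adjugate = 0 := by
    rw [mul_adjugate, exists_mulVec_eq_zero_iff.mp ⟨v, hv, hAv⟩, zero_smul]
  have hgram : A.adjugateᴴ * A.adjugate = 0 := by
    rw [conjTranspose_adjugate_of_conjTranspose_eq_transpose hA]
    refine mul_eq_zero_of_ker_le_ker hAM ?_
    rwa [hker, Submodule.span_singleton_le_iff_mem, LinearMap.mem_ker, mulVecLin_apply]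
  exact adjugate_ne_zero_of_rank_add_one_eq hcorank (conjTranspose_mul_self_eq_zero.mp hgram)

end Adjugate

section Complex

variable {m n : Type*}

theorem conjTranspose_eq_transpose_of_im_eq_zero {A : Matrix m n ℂ}
    (hA : ∀ i j, (A i j).im = 0) : Aᴴ = Aᵀ := by
  ext i j
  simp [Complex.conj_eq_iff_im.mpr (hA j i)]

open scoped ComplexOrder in
theorem add_I_smul_mulVec_eq_zero_iff [Fintype m] [Fintype n] {A N : Matrix m n ℂ} (h : Aᴴ * N = Nᴴ * A)
    {v : n → ℂ} : (A + Complex.I • N) *ᵥ v = 0 ↔ A *ᵥ v = 0 ∧ N *ᵥ v = 0 := by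
  have hgram : (A + Complex.I • N)ᴴ * (A + Complex.I • N) = (fromRows A N)ᴴ * fromRows A N := by
    rw [conjTranspose_fromRows_eq_fromCols_conjTranspose, fromCols_mul_fromRows,
      conjTranspose_add, conjTranspose_smul, Complex.star_def, Complex.conj_I]
    simp only [Matrix.add_mul, Matrix.mul_add, Matrix.smul_mul, Matrix.mul_smul, h]
    match_scalars <;> simp
  rw [← conjTranspose_mul_self_mulVec_eq_zero, hgram, conjTranspose_mul_self_mulVec_eq_zero,
    fromRows_mulVec, ← Sum.elim_zero_zero, Sum.elim_eq_iff]

end Complex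

end Matrix

theorem psi_on_real_subspace_general {n : ℕ} (hn : Even n)
    (V : Submodule ℝ (Matrix (Fin n) (Fin n) ℂ))
    (hV : ∀ A ∈ V, A ≠ 0 → (∀ i j, (A i j).im = 0) ∧ n - 1 ≤ A.rank) :
    ∀ A ∈ V, A ≠ 0 →
      IsUnit (A + Complex.I • (A.adjugate)ᵀ) ∧
        (-A) + Complex.I • ((-A).adjugate)ᵀ = -(A + Complex.I • (A.adjugate)ᵀ) := by
  intro A hAV hA0
  obtain ⟨hreal, hrank⟩ := hV A hAV hA0
  have hA : Aᴴ = Aᵀ := conjTranspose_eq_transpose_of_im_eq_zero hreal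
  refine ⟨?_, ?_⟩
  · rw [isUnit_iff_isUnit_det, isUnit_iff_ne_zero]
    intro hdet
    obtain ⟨v, hv, hBv⟩ := exists_mulVec_eq_zero_iff.mpr hdet
    obtain ⟨hAv, hNv⟩ := (add_I_smul_mulVec_eq_zero_iff
      (conjTranspose_mul_adjugate_transpose_comm hA)).mp hBv
    open scoped ComplexOrder in
    exact adjugate_transpose_mulVec_ne_zero hA (by rw [Fintype.card_fin]; omega) hv hAv hNv
  · rw [adjugate_neg_of_even_card A (by rwa [Fintype.card_fin]), transpose_neg, smul_neg, neg_add]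

theorem psi_on_real_subspace {n : ℕ} (hn : Even n) (hn2 : 2 ≤ n)
    (V : Submodule ℝ (Matrix (Fin n) (Fin n) ℂ))
    (hV : ∀ A ∈ V, A ≠ 0 → (∀ i j, (A i j).im = 0) ∧ n - 1 ≤ A.rank) :
    ∀ A ∈ V, A ≠ 0 →
      IsUnit (A + Complex.I • (A.adjugate)ᵀ) ∧
        (-A) + Complex.I • ((-A).adjugate)ᵀ = -(A + Complex.I • (A.adjugate)ᵀ) :=
  psi_on_real_subspace_general hn V hV
end
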